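/- Let α, α′ and d be integers with d ≥ 0 and 1 ≤ α′ ≤ α, and fix positive integers r_0 = 1, r_1, …, with r_{d−1} dividing r_d. Then, as functions on {0,1}^α × {0,1}^α, η_d refines the function (v,w) ↦ η_d(π_{α′}(v), π_{α′}(w)): for all v, w, x, y ∈ {0,1}^α, if η_d(v,w) = η_d(x,y) then η_d(π_{α′}(v), π_{α′}(w)) = η_d(π_{α′}(x), π_{α′}(y)). -/

import Mathlib

/-!
Coloring machinery of Conlon–Fox–Lee–Sudakov. Vectors in `{0,1}^α` are modelled as
`Bool` lists of length `α`. Fix block lengths `r 0 = 1, r 1, …` with `r d ∣ r (d+1)`.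
-/

/-- The blocks of resolution with block length `r`: split a vector into consecutive
blocks of length `r` (the last block may be shorter). -/
def blocksOf (r : ℕ) (v : List Bool) : List (List Bool) := v.toChunks r

/-- The function `η_d` (with `r = r_d`): records the position `i` of the first pair of
differing blocks of resolution `d` together with the unordered pair `{v_i, w_i}` of
these blocks; it takes the value `none` (playing the role of `0`) when `v = w`. -/
def eta (r : ℕ) (v w : List Bool) : Option (ℕ × Sym2 (List Bool)) :=
  ((((blocksOf r v).zip (blocksOf r w)).zipIdx.map (fun p => (p.2, p.1))).find? (fun q => q.2.1 != q.2.2)).map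
    (fun q => (q.1, s(q.2.1, q.2.2)))

/-- The function `ξ_d`: apply `η_d` to each corresponding pair of blocks of
resolution `d+1`. -/
def xi (r : ℕ → ℕ) (d : ℕ) (v w : List Bool) : List (Option (ℕ × Sym2 (List Bool))) :=
  ((blocksOf (r (d+1)) v).zip (blocksOf (r (d+1)) w)).map fun q => eta (r d) q.1 q.2

/-- The type of colors used by the coloring `c_p`. -/
abbrev EGColor := List (List (Option (ℕ × Sym2 (List Bool))))

instance : DecidableEq (List (Option (ℕ × Sym2 (List Bool)))) := instDecidableEqList
instance : DecidableEq EGColor := instDecidableEqList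

/-- The coloring `c_p (v,w) = (ξ_p(v,w), ξ_{p-1}(v,w), …, ξ_0(v,w))`. -/
def cColor (r : ℕ → ℕ) (p : ℕ) (v w : List Bool) : EGColor :=
  (List.range (p+1)).map fun j => xi r (p - j) v w

/-- The set of colors appearing under `c_p` on (unordered) pairs of distinct
elements of `S`. -/
def colorsOn (r : ℕ → ℕ) (p : ℕ) (S : Finset (List Bool)) : Finset EGColor :=
  ((S ×ˢ S).filter fun q => q.1 ≠ q.2).image fun q => cColor r p q.1 q.2

/-- The vertex set `{0,1}^α`, realized as the set of all `Bool` lists of length `α`. -/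
def allVecs (α : ℕ) : Finset (List Bool) :=
  Finset.univ.image fun v : Fin α → Bool => List.ofFn v

/-- `alphaD rd α`: the largest multiple of `rd` that is strictly less than `α`
(for `α, rd ≥ 1`). -/
def alphaD (rd α : ℕ) : ℕ := rd * ((α - 1) / rd)

/-- The set `C_E^{(d)}` of emerging colors of `S` at resolution `d`: the unordered pairs
`{v'', w''}` of final segments of elements `v = (v', v'')`, `w = (w', w'')` of `S`
(split at `α_d`) with `v' = w'` and `v'' ≠ w''`. -/
def CEset (r : ℕ → ℕ) (α : ℕ) (S : Finset (List Bool)) (d : ℕ) : Finset (Sym2 (List Bool)) :=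
  ((S ×ˢ S).filter fun q =>
      q.1.take (alphaD (r d) α) = q.2.take (alphaD (r d) α) ∧
      q.1.drop (alphaD (r d) α) ≠ q.2.drop (alphaD (r d) α)).image
    fun q => s(q.1.drop (alphaD (r d) α), q.2.drop (alphaD (r d) α))

/-- The set `C_I^{(d)}` of inherited colors of `S` at resolution `d`: the pairs
`(c_p(v', w'), η_{d-1}(v'', w''))` over elements `v = (v', v'')`, `w = (w', w'')` of `S`
(split at `α_d`) with `v' ≠ w'`. -/
def CIset (r : ℕ → ℕ) (p α : ℕ) (S : Finset (List Bool)) (d : ℕ) :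
    Finset (EGColor × Option (ℕ × Sym2 (List Bool))) :=
  ((S ×ˢ S).filter fun q =>
      q.1.take (alphaD (r d) α) ≠ q.2.take (alphaD (r d) α)).image
    fun q => (cColor r p (q.1.take (alphaD (r d) α)) (q.2.take (alphaD (r d) α)),
              eta (r (d-1)) (q.1.drop (alphaD (r d) α)) (q.2.drop (alphaD (r d) α)))

/-!
For `r > 0`, `η` satisfies a block recursion: if the first blocks of `v` and `w` agree, `η r v w`
is `η` of the remainders with its index shifted by one, and otherwise it is `(0, {v₁, w₁})`.
Truncating both vectors at `k` commutes with this recursion, so `η r (π_k v) (π_k w)` is a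
function of `η r v w` alone: cut the recorded pair of blocks down to what survives the
truncation, and return `0` if the two pieces become equal.
-/

namespace List

variable {γ : Type*}

private theorem toChunks_go_eq {n : ℕ} (xs : List γ) (acc₁ : Array γ) (acc₂ : Array (List γ))
    (hne : acc₁.toList ≠ []) (hle : acc₁.size ≤ n) :
    toChunks.go n xs acc₁ acc₂ =
      acc₂.toList ++ (acc₁.toList ++ xs).take n :: ((acc₁.toList ++ xs).drop n).toChunks n := by
  induction xs generalizing acc₁ acc₂ with
  | nil =>
    simp [toChunks.go, take_of_length_le hle, drop_eq_nil_of_le hle, toChunks]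
  | cons x xs ih =>
    rw [toChunks.go]
    by_cases hfull : acc₁.size = n
    · have hlen : acc₁.toList.length = n := by simpa using hfull
      have hpos : 0 < n := hlen ▸ length_pos_iff.2 hne
      simp only [hfull, BEq.rfl, if_true]
      rw [ih _ _ (by simp) (by simp; omega)]
      obtain ⟨m, rfl⟩ : ∃ m, n = m + 1 := ⟨n - 1, by omega⟩
      have hchunks : (x :: xs).toChunks (m + 1) = toChunks.go (m + 1) xs #[x] #[] := rfl
      rw [take_append_of_le_length hlen.ge, take_of_length_le hlen.le,
        drop_append_of_le_length hlen.ge, drop_of_length_le hlen.le, nil_append, hchunks,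
        ih _ _ (by simp) (by simp)]
      simp
    · simp only [beq_iff_eq, hfull, if_false]
      rw [ih _ _ (by simp) (by simp; omega)]
      simp

theorem toChunks_of_ne_nil {n : ℕ} (hn : 0 < n) {l : List γ} (hl : l ≠ []) :
    l.toChunks n = l.take n :: (l.drop n).toChunks n := by
  obtain ⟨x, xs, rfl⟩ := exists_cons_of_ne_nil hl
  obtain ⟨m, rfl⟩ : ∃ m, n = m + 1 := ⟨n - 1, by omega⟩
  exact toChunks_go_eq (n := m + 1) xs #[x] #[] (by simp) (by simp)

end List

/-- Block `i` starts at position `i * r`, so truncating at `k` keeps `k - i * r` entries of it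
(none at all once `k ≤ i * r`). -/
def truncateEta (r k : ℕ) (o : Option (ℕ × Sym2 (List Bool))) : Option (ℕ × Sym2 (List Bool)) :=
  o.bind fun q =>
    let s := q.2.map (List.take (k - q.1 * r))
    if s.IsDiag then none else some (q.1, s)

section Eta

variable {r : ℕ}

@[simp]
theorem eta_nil_left (w : List Bool) : eta r [] w = none := by
  simp [eta, blocksOf, List.toChunks]

@[simp]
theorem eta_nil_right (v : List Bool) : eta r v [] = none := by
  simp [eta, blocksOf, List.toChunks]

theorem eta_of_ne_nil (hr : 0 < r) {v w : List Bool} (hv : v ≠ []) (hw : w ≠ []) :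
    eta r v w =
      if v.take r = w.take r then (eta r (v.drop r) (w.drop r)).map (Prod.map (· + 1) id)
      else some (0, s(v.take r, w.take r)) := by
  unfold eta blocksOf
  rw [List.toChunks_of_ne_nil hr hv, List.toChunks_of_ne_nil hr hw, List.zip_cons_cons,
    List.zipIdx_cons', List.map_cons, List.find?_cons]
  by_cases h : v.take r = w.take r
  · simp only [h, bne_self_eq_false, if_true, List.map_map, List.find?_map, Option.map_map]
    rfl
  · simp [bne_iff_ne.2 h, h]

@[simp]
theorem truncateEta_none (k : ℕ) : truncateEta r k none = none := rfl

@[simp]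
theorem truncateEta_zero (o : Option (ℕ × Sym2 (List Bool))) :
    truncateEta r 0 o = none := by
  rcases o with _ | ⟨i, s⟩
  · rfl
  · induction s using Sym2.inductionOn
    simp [truncateEta]

theorem truncateEta_some_zero (k : ℕ) (a b : List Bool) :
    truncateEta r k (some (0, s(a, b))) =
      if a.take k = b.take k then none else some (0, s(a.take k, b.take k)) := by
  simp [truncateEta]

theorem truncateEta_map_succ (k : ℕ) (o : Option (ℕ × Sym2 (List Bool))) :
    truncateEta r k (o.map (Prod.map (· + 1) id)) =
      (truncateEta r (k - r) o).map (Prod.map (· + 1) id) := by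
  rcases o with _ | ⟨i, s⟩
  · rfl
  · have hk : k - (i + 1) * r = k - r - i * r := by rw [Nat.sub_sub, add_mul, one_mul, add_comm]
    simp only [truncateEta, Option.map_some, Option.bind_some, Prod.map_fst, Prod.map_snd, id, hk]
    split_ifs <;> rfl

theorem eta_take_take (hr : 0 < r) (v w : List Bool) (k : ℕ) :
    eta r (v.take k) (w.take k) = truncateEta r k (eta r v w) := by
  rcases eq_or_ne v [] with rfl | hv
  · simp
  rcases eq_or_ne w [] with rfl | hw
  · simp
  rcases Nat.eq_zero_or_pos k with rfl | hk
  · simp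
  have hvk : v.take k ≠ [] := by simpa [List.take_eq_nil_iff, hk.ne'] using hv
  have hwk : w.take k ≠ [] := by simpa [List.take_eq_nil_iff, hk.ne'] using hw
  rw [eta_of_ne_nil hr hv hw, eta_of_ne_nil hr hvk hwk]
  simp only [List.take_take, List.drop_take]
  by_cases hfirst : v.take r = w.take r
  · have hmin : v.take (min r k) = w.take (min r k) := by
      rw [min_comm, ← List.take_take, hfirst, List.take_take]
    rw [if_pos hfirst, if_pos hmin, truncateEta_map_succ,
      eta_take_take hr (v.drop r) (w.drop r) (k - r)]
  · rw [if_neg hfirst, truncateEta_some_zero, List.take_take, List.take_take]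
    rcases le_or_gt k r with hkr | hrk
    · simp [min_eq_left hkr, min_eq_right hkr, Nat.sub_eq_zero_of_le hkr]
    · simp [min_eq_left hrk.le, min_eq_right hrk.le, hfirst]
termination_by v.length
decreasing_by
  simp only [List.length_drop]
  have := List.length_pos_iff.2 hv
  omega

end Eta

theorem stmt5_general (α' d : ℕ) (r : ℕ → ℕ) (hrpos : ∀ e, 0 < r e) (v w x y : List Bool)
    (h : eta (r d) v w = eta (r d) x y) :
    eta (r d) (v.take α') (w.take α') = eta (r d) (x.take α') (y.take α') := by
  rw [eta_take_take (hrpos d), eta_take_take (hrpos d), h]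

/-- **Lemma 4.2(i).** For `d ≥ 0` and `1 ≤ α' ≤ α`, the function `η_d` refines
`(v, w) ↦ η_d(π_{α'}(v), π_{α'}(w))` on `{0,1}^α × {0,1}^α`. -/
theorem stmt5 (α α' d : ℕ) (hα' : 1 ≤ α') (hα : α' ≤ α) (r : ℕ → ℕ) (hr0 : r 0 = 1)
    (hrpos : ∀ e, 0 < r e) (hrdvd : ∀ e, r e ∣ r (e + 1))
    (v w x y : List Bool) (hv : v.length = α) (hw : w.length = α)
    (hx : x.length = α) (hy : y.length = α)
    (h : eta (r d) v w = eta (r d) x y) :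
    eta (r d) (v.take α') (w.take α') = eta (r d) (x.take α') (y.take α') :=
  stmt5_general α' d r hrpos v w x y h
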